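/- Suppose (X_{st}) is a family of characters of the MKW Hopf algebra satisfying Chen's identity, and Π is defined on trees by Π_x(B₊(φ(ω)))(t) = ⟨X_{xt}, ω⟩ and Γ_{xy} := (X_{yx} ⊗ id)Δ_MKW (on the image of B₊ ∘ φ). Then Π_x ∘ Γ_{xy} = Π_y on trees of the form B₊(φ(ω)). -/

import Mathlib

set_option autoImplicit false

open TensorProduct

/-- Convolution of linear functionals on a coalgebra: `(f ∗ g)(x) = (f ⊗ g)(Δ x)`. -/
noncomputable def convF (k H : Type*) [CommRing k] [AddCommGroup H] [Module k H]
    [Coalgebra k H] (f g : H →ₗ[k] k) : H →ₗ[k] k :=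
  TensorProduct.lift (((LinearMap.mul k k).comp f).compl₂ g) ∘ₗ
    Coalgebra.comul (R := k) (A := H)

/-- `(g ⊗ id) ∘ Δ` for a linear functional `g` on a coalgebra. -/
noncomputable def GammaF (k H : Type*) [CommRing k] [AddCommGroup H] [Module k H]
    [Coalgebra k H] (g : H →ₗ[k] k) : H →ₗ[k] H :=
  (TensorProduct.lid k H).toLinearMap ∘ₗ TensorProduct.map g LinearMap.id ∘ₗ
    Coalgebra.comul (R := k) (A := H)

section Convolution

variable (k H : Type*) [CommRing k] [AddCommGroup H] [Module k H] [Coalgebra k H]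

theorem comp_GammaF (g f : H →ₗ[k] k) : f ∘ₗ GammaF k H g = convF k H g f := by
  unfold GammaF convF
  rw [← LinearMap.comp_assoc, ← LinearMap.comp_assoc]
  congr 1
  ext a b
  simp

theorem GammaF_apply_apply (g f : H →ₗ[k] k) (ω : H) :
    f (GammaF k H g ω) = convF k H g f ω :=
  LinearMap.congr_fun (comp_GammaF k H g f) ω

end Convolution

theorem stmt_15_general (H T : Type*) [Ring H] [Bialgebra ℝ H]
    [AddCommGroup T] [Module ℝ T]
    (X : ℝ → ℝ → (H →ₐ[ℝ] ℝ))
    (chen : ∀ s u t : ℝ,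
      convF ℝ H (X s u).toLinearMap (X u t).toLinearMap = (X s t).toLinearMap)
    (B : H →ₗ[ℝ] T)
    (Pi : ℝ → T →ₗ[ℝ] (ℝ → ℝ))
    (hPi : ∀ (x : ℝ) (ω : H) (t : ℝ), Pi x (B ω) t = X x t ω)
    (Γ : ℝ → ℝ → (T →ₗ[ℝ] T))
    (hΓ : ∀ (x y : ℝ) (ω : H),
      Γ x y (B ω) = B (GammaF ℝ H (X y x).toLinearMap ω)) :
    ∀ (x y : ℝ) (ω : H) (t : ℝ), Pi x (Γ x y (B ω)) t = Pi y (B ω) t := by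
  intro x y ω t
  calc Pi x (Γ x y (B ω)) t
      = (X x t).toLinearMap (GammaF ℝ H (X y x).toLinearMap ω) := by rw [hΓ, hPi]; rfl
    _ = convF ℝ H (X y x).toLinearMap (X x t).toLinearMap ω := GammaF_apply_apply ℝ H _ _ ω
    _ = X y t ω := by rw [chen]; rfl
    _ = Pi y (B ω) t := (hPi y ω t).symm

/-- If characters `X_{st}` of the MKW Hopf algebra satisfy Chen's identity, `B = B₊ ∘ φ`
is an injective linear map from forests to regularity-structure trees, the model is
defined by `Π_x(B ω)(t) = ⟨X_{xt}, ω⟩` and `Γ_{xy}(B ω) = B((X_{yx} ⊗ id)Δ_MKW ω)`, then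
`Π_x ∘ Γ_{xy} = Π_y` on trees of the form `B₊(φ(ω))`. -/
theorem stmt_15 (H T : Type*) [Ring H] [Bialgebra ℝ H]
    [AddCommGroup T] [Module ℝ T]
    (X : ℝ → ℝ → (H →ₐ[ℝ] ℝ))
    (chen : ∀ s u t : ℝ,
      convF ℝ H (X s u).toLinearMap (X u t).toLinearMap = (X s t).toLinearMap)
    (B : H →ₗ[ℝ] T) (hB : Function.Injective B)
    (Pi : ℝ → T →ₗ[ℝ] (ℝ → ℝ))
    (hPi : ∀ (x : ℝ) (ω : H) (t : ℝ), Pi x (B ω) t = X x t ω)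
    (Γ : ℝ → ℝ → (T →ₗ[ℝ] T))
    (hΓ : ∀ (x y : ℝ) (ω : H),
      Γ x y (B ω) = B (GammaF ℝ H (X y x).toLinearMap ω)) :
    ∀ (x y : ℝ) (ω : H) (t : ℝ), Pi x (Γ x y (B ω)) t = Pi y (B ω) t :=
  stmt_15_general H T X chen B Pi hPi Γ hΓ
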